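/- arXiv:2405.19042 — 3 statements merged into one kernel-verified Lean document; each statement's English description precedes it below -/
import Mathlib

section
/- Let C be a (d+2)-angulated category and let X := X_0 → ⋯ → X_{d+1} → Σ_d X_0 and Y := Y_0 → ⋯ → Y_{d+1} → Σ_d Y_0 be (d+2)-angles with final morphisms x_{d+1}, y_{d+1}. Then X and Y are homotopy equivalent (i.e., induce a presentation of the same C-module) if and only if Im C(-,x_{d+1}) ≅ Im C(-,y_{d+1}) in Mod C. -/
open CategoryTheory CategoryTheory.Limits

universe v u

namespace RankDAngulated

variable (C : Type u) [Category.{v} C] [Preadditive C] (d : ℕ) (e : C ≌ C)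

/-- A candidate `(d+2)`-angle: `X₀ → X₁ → ⋯ → X_{d+1} → Σ X₀`
(entries of `obj` beyond `d+1` are junk). -/
structure Candle where
  obj : ℕ → C
  map : ∀ i, obj i ⟶ obj (i + 1)
  last : obj (d + 1) ⟶ e.functor.obj (obj 0)

/-- The category of `C`-modules: additive-group-valued presheaves. -/
abbrev ModC := Cᵒᵖ ⥤ AddCommGrpCat.{v}

/-- Exactness of a two-term complex at the middle spot. -/
def ExactPair {X Y Z : ModC C} (f : X ⟶ Y) (g : Y ⟶ Z) : Prop :=
  ∃ w : f ≫ g = 0, (ShortComplex.mk f g w).Exact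

/-- Exactness of the long sequence of `C`-modules induced by a `(d+2)`-angle. -/
noncomputable def LongExact (A : Candle C d e) : Prop :=
  ExactPair C
      (preadditiveYoneda.map (e.inverse.map A.last ≫ e.unitInv.app (A.obj 0)))
      (preadditiveYoneda.map (A.map 0)) ∧
  (∀ i < d, ExactPair C (preadditiveYoneda.map (A.map i)) (preadditiveYoneda.map (A.map (i + 1)))) ∧
  ExactPair C (preadditiveYoneda.map (A.map d)) (preadditiveYoneda.map A.last)

/-- The data of a (pre-)`(d+2)`-angulated structure on `(C, Σ)`. -/
structure Angulation where
  dist : Set (Candle C d e)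
  id_mem : ∀ X : C, ∃ A ∈ dist,
    (∃ i0 : A.obj 0 ≅ X, ∃ i1 : A.obj 1 ≅ X, i0.inv ≫ A.map 0 ≫ i1.hom = 𝟙 X) ∧
    ∀ i, 2 ≤ i → i ≤ d + 1 → IsZero (A.obj i)
  complete : ∀ {X Y : C} (f : X ⟶ Y), ∃ A ∈ dist,
    ∃ i0 : A.obj 0 ≅ X, ∃ i1 : A.obj 1 ≅ Y, i0.inv ≫ A.map 0 ≫ i1.hom = f
  longExact : ∀ A ∈ dist, LongExact C d e A

section RankAxioms

/-- RM0: constancy on isomorphism classes of morphisms. -/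
def RM0 (ρ : ∀ (X Y : C), (X ⟶ Y) → ℝ) : Prop :=
  ∀ (X Y W Z : C) (f : X ⟶ Y) (g : W ⟶ Z) (ψ : X ≅ W) (φ : Y ≅ Z),
    f ≫ φ.hom = ψ.hom ≫ g → ρ X Y f = ρ W Z g

/-- RM1: additivity on direct sums of morphisms (expressed via binary bicones/biproducts). -/
def RM1 (ρ : ∀ (X Y : C), (X ⟶ Y) → ℝ) : Prop :=
  ∀ (X Y Z W : C) (f : X ⟶ Y) (g : Z ⟶ W)
    (b₁ : BinaryBicone X Z) (_ : b₁.IsBilimit) (b₂ : BinaryBicone Y W) (_ : b₂.IsBilimit),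
    ρ b₁.pt b₂.pt (b₁.fst ≫ f ≫ b₂.inl + b₁.snd ≫ g ≫ b₂.inr) = ρ X Y f + ρ Z W g

/-- RM2: `ρ f - ρ (1_Y) + ρ g = 0` for consecutive pairs in a `(d+2)`-angle
(including the wrap-around pairs obtained by rotation). -/
def RM2 (dist : Set (Candle C d e)) (ρ : ∀ (X Y : C), (X ⟶ Y) → ℝ) : Prop :=
  ∀ A ∈ dist,
    (∀ i < d, ρ _ _ (A.map i) - ρ _ _ (𝟙 (A.obj (i + 1))) + ρ _ _ (A.map (i + 1)) = 0) ∧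
    (ρ _ _ (A.map d) - ρ _ _ (𝟙 (A.obj (d + 1))) + ρ _ _ A.last = 0) ∧
    (ρ _ _ A.last - ρ _ _ (𝟙 (e.functor.obj (A.obj 0))) + ρ _ _ (-(e.functor.map (A.map 0))) = 0)

/-- RM3: invariance under the suspension. -/
def RM3 (ρ : ∀ (X Y : C), (X ⟶ Y) → ℝ) : Prop :=
  ∀ (X Y : C) (f : X ⟶ Y), ρ _ _ (e.functor.map f) = ρ X Y f

/-- A rank function on morphisms. -/
def IsRankM (dist : Set (Candle C d e)) (ρ : ∀ (X Y : C), (X ⟶ Y) → ℝ) : Prop :=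
  (∀ (X Y : C) (f : X ⟶ Y), 0 ≤ ρ X Y f) ∧ RM0 C ρ ∧ RM1 C ρ ∧ RM2 C d e dist ρ ∧ RM3 C e ρ

/-- RO0: constancy on isomorphism classes of objects. -/
def RO0 (r : C → ℝ) : Prop := ∀ (X Y : C), (X ≅ Y) → r X = r Y

/-- RO1: additivity on direct sums. -/
def RO1 (r : C → ℝ) : Prop :=
  ∀ (X Y : C) (b : BinaryBicone X Y), b.IsBilimit → r b.pt = r X + r Y

/-- RO2: the alternating sum over a `(d+2)`-angle is nonnegative. -/
def RO2 (dist : Set (Candle C d e)) (r : C → ℝ) : Prop :=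
  ∀ A ∈ dist, 0 ≤ ∑ i ∈ Finset.range (d + 2), (-1 : ℝ) ^ i * r (A.obj i)

/-- RO3: invariance under the suspension. -/
def RO3 (r : C → ℝ) : Prop := ∀ X : C, r (e.functor.obj X) = r X

/-- A rank function on objects. -/
def IsRankO (dist : Set (Candle C d e)) (r : C → ℝ) : Prop :=
  (∀ X : C, 0 ≤ r X) ∧ RO0 C r ∧ RO1 C r ∧ RO2 C d e dist r ∧ RO3 C e r

end RankAxioms

/-- A `C`-module admitting an image presentation `M ≅ Im C(-,f)`;
in an essentially small `(d+2)`-angulated category these are exactly the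
finitely presented `C`-modules. -/
noncomputable def IsImg (M : ModC C) : Prop :=
  ∃ (X Y : C) (f : X ⟶ Y), Nonempty (M ≅ image (preadditiveYoneda.map f))

/-- An additive function on `mod C`. -/
noncomputable def AddFun (α : ModC C → ℝ) : Prop :=
  (∀ M, IsImg C M → 0 ≤ α M) ∧
  (∀ M N, IsImg C M → IsImg C N → Nonempty (M ≅ N) → α M = α N) ∧
  (∀ S : ShortComplex (ModC C), S.ShortExact →
    IsImg C S.X₁ → IsImg C S.X₂ → IsImg C S.X₃ → α S.X₂ = α S.X₁ + α S.X₃)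

/-- `𝚺_d`-invariance of a function on `mod C`, where `𝚺_d M = M ∘ Σ_d⁻¹`. -/
noncomputable def SigmaInvFun (α : ModC C → ℝ) : Prop :=
  ∀ M : ModC C, IsImg C M → α (e.inverse.op ⋙ M) = α M

end RankDAngulated

namespace RankDAngulated

variable {C : Type u} [Category.{v} C] [Preadditive C] {d : ℕ} {e : C ≌ C}

/-- A `(d+2)`-angle `X` induces a presentation of the `C`-module `M` if there is a right exact
sequence `C(-,X_d) → C(-,X_{d+1}) → M` whose first map is `C(-,x_d)`. -/
noncomputable def Presents (A : Candle C d e) (M : ModC C) : Prop :=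
  ∃ p : preadditiveYoneda.obj (A.obj (d + 1)) ⟶ M,
    Epi p ∧ ExactPair C (preadditiveYoneda.map (A.map d)) p

/-- Two `(d+2)`-angles are homotopy equivalent if they induce a presentation of the same
`C`-module. -/
noncomputable def HomotopyEquivalent (A B : Candle C d e) : Prop :=
  ∃ M : ModC C, Presents A M ∧ Presents B M

/-! A module presented by a `(d+2)`-angle `X` is the cokernel of `C(-,x_d)`, hence determined up
to isomorphism by `X`; by exactness of `C(-,x_d), C(-,x_{d+1})`, the module `Im C(-,x_{d+1})` is
presented by `X`. -/

omit [Preadditive C] in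
lemma exactPair_comp_mono_iff {X Y Z Z' : ModC C} (f : X ⟶ Y) (g : Y ⟶ Z) (ι : Z ⟶ Z')
    [Mono ι] : ExactPair C f (g ≫ ι) ↔ ExactPair C f g := by
  constructor
  · rintro ⟨w, h⟩
    have w' : f ≫ g = 0 := zero_of_comp_mono ι (by rw [Category.assoc, w])
    refine ⟨w', ?_⟩
    exact (ShortComplex.exact_iff_of_epi_of_isIso_of_mono
      (S₂ := ShortComplex.mk f (g ≫ ι) w) { τ₁ := 𝟙 X, τ₂ := 𝟙 Y, τ₃ := ι }).2 h
  · rintro ⟨w, h⟩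
    refine ⟨by rw [← Category.assoc, w, zero_comp], ?_⟩
    exact (ShortComplex.exact_iff_of_epi_of_isIso_of_mono
      (S₁ := ShortComplex.mk f g w) { τ₁ := 𝟙 X, τ₂ := 𝟙 Y, τ₃ := ι }).1 h

omit [Preadditive C] in
lemma nonempty_iso_of_exactPair_of_epi {X Y M N : ModC C} (f : X ⟶ Y) (p : Y ⟶ M)
    (q : Y ⟶ N) [Epi p] [Epi q] (hp : ExactPair C f p) (hq : ExactPair C f q) :
    Nonempty (M ≅ N) := by
  obtain ⟨wp, hp⟩ := hp
  obtain ⟨wq, hq⟩ := hq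
  have : Epi (ShortComplex.mk f p wp).g := ‹Epi p›
  have : Epi (ShortComplex.mk f q wq).g := ‹Epi q›
  exact ⟨hp.gIsCokernel.coconePointUniqueUpToIso hq.gIsCokernel⟩

namespace Presents

lemma nonempty_iso {A : Candle C d e} {M N : ModC C} (hM : Presents A M) (hN : Presents A N) :
    Nonempty (M ≅ N) := by
  obtain ⟨p, _, hp⟩ := hM
  obtain ⟨q, _, hq⟩ := hN
  exact nonempty_iso_of_exactPair_of_epi _ p q hp hq

lemma of_iso {A : Candle C d e} {M N : ModC C} (hM : Presents A M) (φ : M ≅ N) :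
    Presents A N := by
  obtain ⟨p, _, hp⟩ := hM
  exact ⟨p ≫ φ.hom, epi_comp _ _, (exactPair_comp_mono_iff _ _ _).2 hp⟩

end Presents

lemma presents_image_last {A : Candle C d e}
    (hA : ExactPair C (preadditiveYoneda.map (A.map d)) (preadditiveYoneda.map A.last)) :
    Presents A (image (preadditiveYoneda.map A.last)) := by
  refine ⟨factorThruImage _, inferInstance, ?_⟩
  rwa [← exactPair_comp_mono_iff _ _ (image.ι _), image.fac]

/-- Two `(d+2)`-angles `X` and `Y` in a `(d+2)`-angulated category are
homotopy equivalent if and only if `Im C(-,x_{d+1}) ≅ Im C(-,y_{d+1})` in `Mod C`. -/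
theorem homotopyEquivalent_iff_image_iso
    (T : Angulation C d e) (A B : Candle C d e) (hA : A ∈ T.dist) (hB : B ∈ T.dist) :
    HomotopyEquivalent A B ↔
      Nonempty (image (preadditiveYoneda.map A.last) ≅ image (preadditiveYoneda.map B.last)) := by
  have hImA := presents_image_last (T.longExact A hA).2.2
  have hImB := presents_image_last (T.longExact B hB).2.2
  constructor
  · rintro ⟨M, hAM, hBM⟩
    obtain ⟨φ⟩ := hImA.nonempty_iso hAM
    obtain ⟨ψ⟩ := hBM.nonempty_iso hImB
    exact ⟨φ ≪≫ ψ⟩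
  · rintro ⟨φ⟩
    exact ⟨_, hImA, hImB.of_iso φ.symm⟩

end RankDAngulated
end

section
/- Let d be a positive odd integer, C an essentially small (d+2)-angulated category, and ρ an assignment of nonnegative real numbers to morphisms of C satisfying axioms RM0 and RM2. If X_0 →^{x_0} X_1 → X_2 → ⋯ → X_{d+1} → Σ_d X_0 is a (d+2)-angle in C, then ρ(x_0) + ρ(Σ_d x_0) = Σ_{i=0}^{d+1} (-1)^i ρ(1_{X_{i+1}}), where X_{d+2} := Σ_d X_0. -/
open CategoryTheory CategoryTheory.Limits

universe v u

namespace RankDAngulated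

variable {C : Type u} [Category.{v} C] [Preadditive C] {d : ℕ} {e : C ≌ C}

/-! RM2 says that the ranks of two consecutive maps of a `(d+2)`-angle add up to the rank of the
identity between them, so the alternating sum of the identities telescopes to
`ρ(x₀) ± ρ(-Σ_d x₀)`; for odd `d` the sign is `+`, and RM0 identifies `ρ(-Σ_d x₀)` with
`ρ(Σ_d x₀)`. -/

lemma sum_range_neg_one_pow_mul_of_add_eq (a r : ℕ → ℝ) (n : ℕ)
    (h : ∀ i < n, a i + a (i + 1) = r i) :
    ∑ i ∈ Finset.range n, (-1 : ℝ) ^ i * r i = a 0 - (-1 : ℝ) ^ n * a n := by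
  have hterm : ∀ i ∈ Finset.range n,
      (-1 : ℝ) ^ i * r i = (-1) ^ i * a i - (-1) ^ (i + 1) * a (i + 1) := by
    intro i hi
    rw [← h i (Finset.mem_range.mp hi), pow_succ]
    ring
  rw [Finset.sum_congr rfl hterm, Finset.sum_range_sub']
  simp

lemma RM0.apply_neg {ρ : ∀ (X Y : C), (X ⟶ Y) → ℝ} (hρ : RM0 C ρ) {X Y : C} (f : X ⟶ Y) :
    ρ X Y (-f) = ρ X Y f :=
  hρ _ _ _ _ _ _ ⟨-𝟙 X, -𝟙 X, by simp, by simp⟩ (Iso.refl Y) (by simp)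

theorem rank_alternating_sum_general (hd : Odd d)
    (T : Angulation C d e) (ρ : ∀ (X Y : C), (X ⟶ Y) → ℝ)
    (hRM0 : RM0 C ρ) (hRM2 : RM2 C d e T.dist ρ)
    (A : Candle C d e) (hA : A ∈ T.dist) :
    ρ _ _ (A.map 0) + ρ _ _ (e.functor.map (A.map 0)) =
      (∑ i ∈ Finset.range (d + 1), (-1 : ℝ) ^ i * ρ _ _ (𝟙 (A.obj (i + 1)))) +
        (-1 : ℝ) ^ (d + 1) * ρ _ _ (𝟙 (e.functor.obj (A.obj 0))) := by
  obtain ⟨hmid, hlast, hwrap⟩ := hRM2 A hA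
  have htelescope := sum_range_neg_one_pow_mul_of_add_eq (fun i => ρ _ _ (A.map i))
    (fun i => ρ _ _ (𝟙 (A.obj (i + 1)))) d fun i hi => by linarith [hmid i hi]
  rw [Finset.sum_range_succ, htelescope, hd.neg_one_pow, hd.add_one.neg_one_pow]
  linarith [hRM0.apply_neg (e.functor.map (A.map 0))]

/-- Let `d` be odd and `ρ` an assignment of nonnegative reals to morphisms
satisfying RM0 and RM2.  For a `(d+2)`-angle `X₀ →^{x₀} X₁ → ⋯ → X_{d+1} → Σ_d X₀`:
`ρ(x₀) + ρ(Σ_d x₀) = ∑_{i=0}^{d+1} (-1)^i ρ(1_{X_{i+1}})`, where `X_{d+2} := Σ_d X₀`. -/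
theorem rank_alternating_sum (hd : Odd d)
    (T : Angulation C d e) (ρ : ∀ (X Y : C), (X ⟶ Y) → ℝ)
    (hnonneg : ∀ (X Y : C) (f : X ⟶ Y), 0 ≤ ρ X Y f)
    (hRM0 : RM0 C ρ) (hRM2 : RM2 C d e T.dist ρ)
    (A : Candle C d e) (hA : A ∈ T.dist) :
    ρ _ _ (A.map 0) + ρ _ _ (e.functor.map (A.map 0)) =
      (∑ i ∈ Finset.range (d + 1), (-1 : ℝ) ^ i * ρ _ _ (𝟙 (A.obj (i + 1)))) +
        (-1 : ℝ) ^ (d + 1) * ρ _ _ (𝟙 (e.functor.obj (A.obj 0))) :=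
  rank_alternating_sum_general hd T ρ hRM0 hRM2 A hA

end RankDAngulated
end

section
/- Let C be an essentially small (d+2)-angulated category and ρ_m a rank function on morphisms in C. Then the assignment Φ(ρ_m) : X ↦ ρ_m(1_X) is a rank function on objects in C; that is, it is constant on isomorphism classes (RO0), additive on direct sums (RO1), satisfies Σ_{i=0}^{d+1} (-1)^i Φ(ρ_m)(X_i) ≥ 0 for every (d+2)-angle X_0 → ⋯ → X_{d+1} → Σ_d X_0 (RO2), and satisfies Φ(ρ_m)(Σ_d X) = Φ(ρ_m)(X) (RO3). -/
open CategoryTheory CategoryTheory.Limits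

universe v u

/-! Writing `a_i` for the rank of the `i`-th map of a `(d+2)`-angle (with `a_{d+1}` the rank of
`X_{d+1} → Σ X₀`) and `r_i` for the rank of `1_{X_i}`, RM2 says `r_{i+1} = a_i + a_{i+1}`, and the
wrap-around pair together with RM3 and RM0 (for the sign) gives `r_0 = a_0 + a_{d+1}`. The
alternating sum of the `r_i` therefore telescopes to `(1 + (-1)^{d+1}) a_{d+1} ≥ 0`. -/

namespace RankDAngulated

theorem alternating_sum_eq_of_add_eq {R : Type*} [CommRing R] (r a : ℕ → R) (n : ℕ)
    (h : ∀ i < n, r (i + 1) = a i + a (i + 1)) :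
    ∑ i ∈ Finset.range (n + 1), (-1 : R) ^ i * r i = r 0 - a 0 + (-1) ^ n * a n := by
  induction n with
  | zero => simp
  | succ n ih =>
    rw [Finset.sum_range_succ, ih fun i hi => h i (by omega), h n (by omega)]
    ring

theorem one_add_neg_one_pow_nonneg {R : Type*} [Ring R] [PartialOrder R] [IsOrderedRing R]
    (n : ℕ) : 0 ≤ 1 + (-1 : R) ^ n := by
  rcases neg_one_pow_eq_or R n with h | h <;> rw [h] <;> norm_num

section RankFunctions

variable {C : Type u} [Category.{v} C] {d : ℕ} {e : C ≌ C}
  {ρ : ∀ (X Y : C), (X ⟶ Y) → ℝ}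

/-- The paper's `Φ(ρ_m)`. -/
def objRank (ρ : ∀ (X Y : C), (X ⟶ Y) → ℝ) (X : C) : ℝ := ρ X X (𝟙 X)

/-- The rank `a_i` of the `i`-th map of `A`, where the map with index `d + 1` is `A.last`. -/
noncomputable def edgeRank (ρ : ∀ (X Y : C), (X ⟶ Y) → ℝ) (A : Candle C d e) (i : ℕ) : ℝ :=
  if i ≤ d then ρ _ _ (A.map i) else ρ _ _ A.last

theorem edgeRank_of_le {A : Candle C d e} {i : ℕ} (hi : i ≤ d) :
    edgeRank ρ A i = ρ _ _ (A.map i) :=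
  if_pos hi

theorem edgeRank_last (A : Candle C d e) : edgeRank ρ A (d + 1) = ρ _ _ A.last :=
  if_neg (Nat.not_succ_le_self d)

theorem objRank_functor_obj (h3 : RM3 C e ρ) (X : C) :
    objRank ρ (e.functor.obj X) = objRank ρ X := by
  rw [objRank, ← e.functor.map_id, h3, objRank]

theorem ro0_objRank (h0 : RM0 C ρ) : RO0 C (objRank ρ) :=
  fun X Y i => h0 X X Y Y (𝟙 X) (𝟙 Y) i i (by simp)

theorem ro3_objRank (h3 : RM3 C e ρ) : RO3 C e (objRank ρ) :=
  objRank_functor_obj h3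

variable [Preadditive C]

theorem apply_neg_of_rm0 (h0 : RM0 C ρ) {X Y : C} (f : X ⟶ Y) : ρ X Y (-f) = ρ X Y f :=
  h0 X Y X Y (-f) f ⟨-𝟙 X, -𝟙 X, by simp, by simp⟩ (Iso.refl Y) (by simp)

theorem ro1_objRank (h1 : RM1 C ρ) : RO1 C (objRank ρ) := by
  intro X Y b hb
  have hid : b.fst ≫ 𝟙 X ≫ b.inl + b.snd ≫ 𝟙 Y ≫ b.inr = 𝟙 b.pt := by
    apply BinaryFan.IsLimit.hom_ext hb.isLimit <;> simp
  unfold objRank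
  simpa only [hid] using h1 X X Y Y (𝟙 X) (𝟙 Y) b hb b hb

section Angle

variable {dist : Set (Candle C d e)} {A : Candle C d e}

theorem objRank_obj_succ (h2 : RM2 C d e dist ρ) (hA : A ∈ dist) {i : ℕ} (hi : i < d + 1) :
    objRank ρ (A.obj (i + 1)) = edgeRank ρ A i + edgeRank ρ A (i + 1) := by
  obtain ⟨hmid, hlast, -⟩ := h2 A hA
  rw [edgeRank_of_le (by omega)]
  rcases Nat.lt_succ_iff_lt_or_eq.mp hi with hlt | rfl
  · rw [edgeRank_of_le hlt, objRank]
    linarith [hmid i hlt]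
  · rw [edgeRank_last, objRank]
    linarith

theorem objRank_obj_zero (h0 : RM0 C ρ) (h2 : RM2 C d e dist ρ) (h3 : RM3 C e ρ)
    (hA : A ∈ dist) :
    objRank ρ (A.obj 0) = edgeRank ρ A 0 + edgeRank ρ A (d + 1) := by
  obtain ⟨-, -, hwrap⟩ := h2 A hA
  have hsusp : ρ _ _ (𝟙 (e.functor.obj (A.obj 0))) = objRank ρ (A.obj 0) :=
    objRank_functor_obj h3 (A.obj 0)
  rw [apply_neg_of_rm0 h0, h3, hsusp] at hwrap
  rw [edgeRank_of_le (Nat.zero_le d), edgeRank_last]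
  linarith

theorem ro2_objRank (hpos : ∀ (X Y : C) (f : X ⟶ Y), 0 ≤ ρ X Y f) (h0 : RM0 C ρ)
    (h2 : RM2 C d e dist ρ) (h3 : RM3 C e ρ) : RO2 C d e dist (objRank ρ) := by
  intro A hA
  have htelescope := alternating_sum_eq_of_add_eq (fun i => objRank ρ (A.obj i))
    (edgeRank ρ A) (d + 1) fun i hi => objRank_obj_succ h2 hA hi
  have hsum : ∑ i ∈ Finset.range (d + 2), (-1 : ℝ) ^ i * objRank ρ (A.obj i)
      = (1 + (-1) ^ (d + 1)) * edgeRank ρ A (d + 1) := by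
    rw [htelescope, objRank_obj_zero h0 h2 h3 hA]
    ring
  rw [hsum]
  exact mul_nonneg (one_add_neg_one_pow_nonneg _)
    (by rw [edgeRank_last]; exact hpos _ _ _)

end Angle

end RankFunctions

variable {C : Type u} [Category.{v} C] [Preadditive C] {d : ℕ} {e : C ≌ C}

/-- If `ρ_m` is a rank function on morphisms in an essentially small
`(d+2)`-angulated category `C`, then `Φ(ρ_m) : X ↦ ρ_m(1_X)` is a rank function on objects:
it satisfies RO0, RO1, RO2 and RO3. -/
theorem rankM_to_rankO
    (T : Angulation C d e) (ρ : ∀ (X Y : C), (X ⟶ Y) → ℝ)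
    (hρ : IsRankM C d e T.dist ρ) :
    IsRankO C d e T.dist (fun X => ρ X X (𝟙 X)) := by
  obtain ⟨hpos, h0, h1, h2, h3⟩ := hρ
  exact ⟨fun X => hpos X X (𝟙 X), ro0_objRank h0, ro1_objRank h1, ro2_objRank hpos h0 h2 h3,
    ro3_objRank h3⟩

end RankDAngulated
end
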